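/- Let N ≥ 2 be a real number, 0 < α < 1, and r a positive integer with N^α ≥ 1. Define w_j = 2j/N^{1-α} and z_j = (2^{j+2}+2)/N^{j-α}. Then for each 2 ≤ i ≤ r, z_i·∏_{j=i+1}^r w_j ≤ z_{i-1}·∏_{j=i}^r w_j; consequently ∏_{j=1}^r w_j + ∑_{i=1}^{r-1} z_i·∏_{j=i+1}^r w_j + z_r ≤ (r+1)·z_1·(w_r)^{r-1}. -/

import Mathlib

/-!
With `T i = z i * ∏_{j=i+1}^r w j`, the ratio `z i / (z (i-1) * w i)` is
`(2^(i+2)+2) / ((2^(i+1)+2) * 2i * N^α) ≤ 1` (as `N^α ≥ 1`), so `T i ≤ T (i-1)` and every `T i`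
is at most `T 1 = z 1 * ∏_{j=2}^r w j`. So is `∏_{j=1}^r w j`, since `w 1 ≤ z 1`; and
`∏_{j=2}^r w j ≤ (w r)^(r-1)` because `w` is increasing. The sum has `r + 1` such terms.
-/

open Finset

section Telescoping

variable {R : Type*} [CommSemiring R] [PartialOrder R] [IsOrderedRing R] {w z : ℕ → R} {r : ℕ}

theorem mul_prod_Icc_succ_le_mul_prod_Icc (hw : ∀ j, 0 ≤ w j)
    (hzw : ∀ k, z (k + 1) ≤ z k * w (k + 1)) {k : ℕ} (hk : k + 1 ≤ r) :
    z (k + 1) * ∏ j ∈ Icc (k + 1 + 1) r, w j ≤ z k * ∏ j ∈ Icc (k + 1) r, w j :=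
  calc z (k + 1) * ∏ j ∈ Icc (k + 1 + 1) r, w j
      ≤ z k * w (k + 1) * ∏ j ∈ Icc (k + 1 + 1) r, w j :=
        mul_le_mul_of_nonneg_right (hzw k) (prod_nonneg fun j _ => hw j)
    _ = z k * ∏ j ∈ Icc (k + 1) r, w j := by
        rw [mul_assoc, ← mul_prod_Ioc_eq_prod_Icc hk, Icc_add_one_left_eq_Ioc]

theorem mul_prod_Icc_succ_le_mul_prod_Icc_two (hw : ∀ j, 0 ≤ w j)
    (hzw : ∀ k, z (k + 1) ≤ z k * w (k + 1)) {i : ℕ} (hi : 1 ≤ i) (hir : i ≤ r) :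
    z i * ∏ j ∈ Icc (i + 1) r, w j ≤ z 1 * ∏ j ∈ Icc 2 r, w j := by
  induction i, hi using Nat.le_induction with
  | base => rfl
  | succ k _ ih => exact (mul_prod_Icc_succ_le_mul_prod_Icc hw hzw hir).trans (ih (by omega))

theorem prod_Icc_add_sum_add_le (hw : ∀ j, 0 ≤ w j) (hw_mono : Monotone w) (hw1 : w 1 ≤ z 1)
    (hz1 : 0 ≤ z 1) (hzw : ∀ k, z (k + 1) ≤ z k * w (k + 1)) (hr : 1 ≤ r) :
    ∏ j ∈ Icc 1 r, w j + ∑ i ∈ Icc 1 (r - 1), z i * ∏ j ∈ Icc (i + 1) r, w j + z r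
      ≤ (r + 1) * z 1 * w r ^ (r - 1) := by
  set B := z 1 * ∏ j ∈ Icc 2 r, w j
  have h_first : ∏ j ∈ Icc 1 r, w j ≤ B := by
    rw [← mul_prod_Ioc_eq_prod_Icc hr, ← Icc_add_one_left_eq_Ioc]
    exact mul_le_mul_of_nonneg_right hw1 (prod_nonneg fun j _ => hw j)
  have h_middle : ∑ i ∈ Icc 1 (r - 1), z i * ∏ j ∈ Icc (i + 1) r, w j ≤ (r - 1 : ℕ) * B := by
    have := sum_le_card_nsmul (Icc 1 (r - 1)) (fun i => z i * ∏ j ∈ Icc (i + 1) r, w j) B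
      fun i hi => mul_prod_Icc_succ_le_mul_prod_Icc_two hw hzw (mem_Icc.1 hi).1 (by grind)
    simpa [nsmul_eq_mul] using this
  have h_last : z r ≤ B := by
    simpa using mul_prod_Icc_succ_le_mul_prod_Icc_two hw hzw hr le_rfl
  have h_prod : ∏ j ∈ Icc 2 r, w j ≤ w r ^ (r - 1) := by
    calc ∏ j ∈ Icc 2 r, w j ≤ ∏ j ∈ Icc 2 r, w r :=
          prod_le_prod (fun j _ => hw j) fun j hj => hw_mono (mem_Icc.1 hj).2
      _ = w r ^ (r - 1) := by rw [prod_const, Nat.card_Icc]; rfl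
  calc ∏ j ∈ Icc 1 r, w j + ∑ i ∈ Icc 1 (r - 1), z i * ∏ j ∈ Icc (i + 1) r, w j + z r
      ≤ B + (r - 1 : ℕ) * B + B := add_le_add (add_le_add h_first h_middle) h_last
    _ = (r + 1) * B := by
        conv_rhs => rw [← Nat.sub_add_cancel hr]
        push_cast; ring
    _ ≤ (r + 1) * z 1 * w r ^ (r - 1) := by
        rw [← mul_assoc]
        exact mul_le_mul_of_nonneg_left h_prod (mul_nonneg (add_nonneg r.cast_nonneg zero_le_one) hz1)

end Telescoping

namespace MomentBound

noncomputable def w (N α : ℝ) (j : ℕ) : ℝ := 2 * j / N ^ (1 - α)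

noncomputable def z (N α : ℝ) (j : ℕ) : ℝ := (2 ^ (j + 2) + 2) / N ^ ((j : ℝ) - α)

variable {N α : ℝ}

theorem w_nonneg (hN : 0 ≤ N) (j : ℕ) : 0 ≤ w N α j := by
  unfold w; positivity

theorem z_nonneg (hN : 0 ≤ N) (j : ℕ) : 0 ≤ z N α j := by
  unfold z; positivity

theorem monotone_w (hN : 0 ≤ N) : Monotone (w N α) := fun i j hij => by
  unfold w; gcongr

theorem w_one_le_z_one (hN : 0 ≤ N) : w N α 1 ≤ z N α 1 := by
  unfold w z; push_cast; gcongr; norm_num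

theorem z_succ_le_z_mul_w (hN : 0 < N) (hNα : 1 ≤ N ^ α) (k : ℕ) :
    z N α (k + 1) ≤ z N α k * w N α (k + 1) := by
  have hk : (1 : ℝ) ≤ k + 1 := by linarith [k.cast_nonneg (α := ℝ)]
  have h_num : (2 : ℝ) ^ (k + 1 + 2) + 2 ≤ (2 ^ (k + 2) + 2) * (2 * (k + 1)) * N ^ α :=
    calc (2 : ℝ) ^ (k + 1 + 2) + 2 ≤ (2 ^ (k + 2) + 2) * 2 := by rw [pow_succ]; linarith
      _ ≤ (2 ^ (k + 2) + 2) * (2 * (k + 1)) := by gcongr; linarith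
      _ ≤ (2 ^ (k + 2) + 2) * (2 * (k + 1)) * N ^ α := le_mul_of_one_le_right (by positivity) hNα
  have h_exp : ((k + 1 : ℕ) : ℝ) - α = (k - α) + (1 - α) + α := by push_cast; ring
  calc z N α (k + 1) ≤ (2 ^ (k + 2) + 2) * (2 * (k + 1)) * N ^ α / N ^ (((k + 1 : ℕ) : ℝ) - α) :=
        div_le_div_of_nonneg_right h_num (by positivity)
    _ = z N α k * w N α (k + 1) := by
        rw [h_exp, Real.rpow_add hN, Real.rpow_add hN]
        unfold z w
        field_simp
        push_cast; ring

end MomentBound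

theorem stmt4_general (N α : ℝ) (r : ℕ) (hN : 2 ≤ N) (hr : 1 ≤ r)
    (hNα : 1 ≤ N ^ α)
    (w z : ℕ → ℝ)
    (hw : ∀ j : ℕ, w j = 2 * j / N ^ (1 - α))
    (hz : ∀ j : ℕ, z j = (2 ^ (j + 2) + 2) / N ^ ((j : ℝ) - α)) :
    (∀ i : ℕ, 2 ≤ i → i ≤ r →
        z i * ∏ j ∈ Finset.Icc (i + 1) r, w j ≤ z (i - 1) * ∏ j ∈ Finset.Icc i r, w j)
    ∧ ∏ j ∈ Finset.Icc 1 r, w j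
        + ∑ i ∈ Finset.Icc 1 (r - 1), z i * ∏ j ∈ Finset.Icc (i + 1) r, w j
        + z r ≤ (r + 1) * z 1 * (w r) ^ (r - 1) := by
  obtain rfl : w = MomentBound.w N α := funext hw
  obtain rfl : z = MomentBound.z N α := funext hz
  have hN0 : 0 < N := by linarith
  have hw0 := MomentBound.w_nonneg (α := α) hN0.le
  have hzw := MomentBound.z_succ_le_z_mul_w hN0 hNα
  refine ⟨fun i hi hir => ?_, prod_Icc_add_sum_add_le hw0 (MomentBound.monotone_w hN0.le)
    (MomentBound.w_one_le_z_one hN0.le) (MomentBound.z_nonneg hN0.le 1) hzw hr⟩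
  obtain ⟨k, rfl⟩ : ∃ k, i = k + 1 := ⟨i - 1, by omega⟩
  simpa using mul_prod_Icc_succ_le_mul_prod_Icc hw0 hzw hir

/-- Key combinatorial estimate telescoping the iterated moment bound. -/
theorem stmt4 (N α : ℝ) (r : ℕ) (hN : 2 ≤ N) (hα1 : 0 < α) (hα2 : α < 1) (hr : 1 ≤ r)
    (hNα : 1 ≤ N ^ α)
    (w z : ℕ → ℝ)
    (hw : ∀ j : ℕ, w j = 2 * j / N ^ (1 - α))
    (hz : ∀ j : ℕ, z j = (2 ^ (j + 2) + 2) / N ^ ((j : ℝ) - α)) :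
    (∀ i : ℕ, 2 ≤ i → i ≤ r →
        z i * ∏ j ∈ Finset.Icc (i + 1) r, w j ≤ z (i - 1) * ∏ j ∈ Finset.Icc i r, w j)
    ∧ ∏ j ∈ Finset.Icc 1 r, w j
        + ∑ i ∈ Finset.Icc 1 (r - 1), z i * ∏ j ∈ Finset.Icc (i + 1) r, w j
        + z r ≤ (r + 1) * z 1 * (w r) ^ (r - 1) :=
  stmt4_general N α r hN hr hNα w z hw hz
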